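/- Let n ≥ 1 and let 0 = t₀ < t₁ < ⋯ < t_{2n} be real numbers. Define μ(t) = 8 · Σ_{k=0}^∞ (1/((2k+1)²π²)) · (1 − e^{−(2k+1)²π² t} · Σ_{j=0}^{2n} (−1)^j e^{(2k+1)²π² t_j}) for t ≥ t_{2n}. Then μ is strictly monotone increasing on [t_{2n}, ∞), μ(t) → 1 as t → ∞, and consequently for every M with μ(t_{2n}) < M < 1 there exists a unique t_{2n+1} > t_{2n} with μ(t_{2n+1}) = M. -/

import Mathlib

/-!
With `c_k = (2k+1)²π²` and `A_k = ∑_{j ≤ 2n} (-1)^j e^{c_k t_j}`, the identity `∑ 1/c_k = 1/8`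
gives `μ(s) = 1 - 8 ∑_k c_k⁻¹ e^{-c_k s} A_k`. Because `j ↦ e^{c_k t_j}` increases, the
alternating sum satisfies `0 < A_k ≤ e^{c_k t_{2n}}`, so for `s ≥ t_{2n}` every term of the series
is positive, strictly decreasing in `s` and at most `1/c_k`. Hence `μ` is continuous and strictly
increasing on `[t_{2n}, ∞)` and tends to `1` by dominated convergence; the intermediate value
theorem then produces `t_{2n+1}`.
-/

/-- The total mass for `t ≥ t_{2n}` (boundary value switched back on at `t_{2n}`):
`μ(t) = 8 ∑_{k=0}^∞ (1/((2k+1)²π²)) (1 - e^{-(2k+1)²π² t} ∑_{j=0}^{2n} (-1)^j e^{(2k+1)²π² t_j})`. -/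
noncomputable def muOn (n : ℕ) (t : ℕ → ℝ) (s : ℝ) : ℝ :=
  8 * ∑' k : ℕ, (1 / ((2 * (k : ℝ) + 1) ^ 2 * Real.pi ^ 2)) *
    (1 - Real.exp (-((2 * (k : ℝ) + 1) ^ 2 * Real.pi ^ 2) * s) *
      ∑ j ∈ Finset.range (2 * n + 1), (-1 : ℝ) ^ j *
        Real.exp (((2 * (k : ℝ) + 1) ^ 2 * Real.pi ^ 2) * t j))

open Real Filter Topology Set Finset

theorem hasSum_one_div_odd_sq :
    HasSum (fun k : ℕ => 1 / (2 * (k : ℝ) + 1) ^ 2) (π ^ 2 / 8) := by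
  have hall : HasSum (fun n : ℕ => 1 / (n : ℝ) ^ 2) (π ^ 2 / 6) := hasSum_zeta_two
  have heven : HasSum (fun k : ℕ => 1 / ((2 * k : ℕ) : ℝ) ^ 2) (π ^ 2 / 24) := by
    rw [show π ^ 2 / 24 = 1 / 4 * (π ^ 2 / 6) by ring]
    refine (hall.mul_left (1 / 4)).congr_fun fun k => ?_
    push_cast
    ring
  have hinj : Function.Injective fun k : ℕ => 2 * k + 1 := fun a b h => by simpa using h
  obtain ⟨L, hodd⟩ : Summable fun k : ℕ => 1 / ((2 * k + 1 : ℕ) : ℝ) ^ 2 :=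
    hall.summable.comp_injective hinj
  obtain rfl : L = π ^ 2 / 8 := by
    have := hall.unique (heven.even_add_odd (f := fun n : ℕ => 1 / (n : ℝ) ^ 2) hodd)
    linarith
  exact_mod_cast hodd

theorem sum_range_alternating_succ {R : Type*} [Ring R] (a : ℕ → R) (m : ℕ) :
    ∑ j ∈ range (2 * (m + 1) + 1), (-1) ^ j * a j =
      ∑ j ∈ range (2 * m + 1), (-1) ^ j * a j - a (2 * m + 1) + a (2 * (m + 1)) := by
  rw [show 2 * (m + 1) + 1 = 2 * m + 1 + 1 + 1 by ring, sum_range_succ, sum_range_succ]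
  simp [pow_succ, pow_mul, sub_eq_add_neg, show 2 * m + 1 + 1 = 2 * (m + 1) by ring]

theorem sum_range_alternating_mem_Icc {R : Type*} [Ring R] [PartialOrder R] [IsOrderedAddMonoid R]
    {a : ℕ → R} (m : ℕ) (ha : ∀ i < 2 * m, a i ≤ a (i + 1)) :
    ∑ j ∈ range (2 * m + 1), (-1) ^ j * a j ∈ Icc (a 0) (a (2 * m)) := by
  induction m with
  | zero => simp
  | succ m ih =>
    obtain ⟨hlow, hup⟩ := ih fun i hi => ha i (by omega)
    have h₁ : a (2 * m) ≤ a (2 * m + 1) := ha _ (by omega)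
    have h₂ : a (2 * m + 1) ≤ a (2 * (m + 1)) := ha _ (by omega)
    rw [sum_range_alternating_succ]
    constructor
    · calc a 0 ≤ ∑ j ∈ range (2 * m + 1), (-1) ^ j * a j := hlow
        _ ≤ _ := by rwa [sub_add_eq_add_sub, le_sub_iff_add_le, add_le_add_iff_left]
    · calc _ ≤ a (2 * m + 1) - a (2 * m + 1) + a (2 * (m + 1)) := by gcongr; exact hup.trans h₁
        _ = a (2 * (m + 1)) := by rw [sub_self, zero_add]

theorem StrictMonoOn.existsUnique_gt_eq_of_tendsto {α δ : Type*}
    [ConditionallyCompleteLinearOrder α] [TopologicalSpace α] [OrderTopology α] [DenselyOrdered α]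
    [LinearOrder δ] [TopologicalSpace δ] [OrderClosedTopology δ]
    {f : α → δ} {a : α} {L M : δ} (hf : StrictMonoOn f (Ici a)) (hcont : ContinuousOn f (Ici a))
    (hlim : Tendsto f atTop (𝓝 L)) (haM : f a < M) (hML : M < L) :
    ∃! s, a < s ∧ f s = M := by
  have : Nonempty α := ⟨a⟩
  obtain ⟨s, hs, hsM⟩ : M ∈ f '' Ici a :=
    isPreconnected_Ici.intermediate_value_Ico self_mem_Ici
      (le_principal_iff.mpr (Ici_mem_atTop a)) hcont hlim ⟨haM.le, hML⟩
  have has : a < s := lt_of_le_of_ne hs (by rintro rfl; exact haM.ne hsM)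
  exact ⟨s, ⟨has, hsM⟩, fun r ⟨har, hrM⟩ =>
    hf.injOn (mem_Ici.2 har.le) (mem_Ici.2 has.le) (hrM.trans hsM.symm)⟩

noncomputable def expSeries (c A : ℕ → ℝ) (s : ℝ) : ℝ :=
  ∑' k, 1 / c k * (exp (-c k * s) * A k)

section ExpSeries

variable {c A : ℕ → ℝ} {τ : ℝ}

theorem expSeries_term_pos (hc : ∀ k, 0 < c k) (hA : ∀ k, 0 < A k) (k : ℕ) (s : ℝ) :
    0 < 1 / c k * (exp (-c k * s) * A k) := by
  have := hc k
  have := hA k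
  positivity

theorem expSeries_term_strictAnti (hc : ∀ k, 0 < c k) (hA : ∀ k, 0 < A k) (k : ℕ) :
    StrictAnti fun s => 1 / c k * (exp (-c k * s) * A k) := fun s₁ s₂ hs => by
  have hck := hc k
  have hexp : exp (-c k * s₂) < exp (-c k * s₁) := exp_lt_exp.2 (by nlinarith)
  exact mul_lt_mul_of_pos_left (mul_lt_mul_of_pos_right hexp (hA k)) (by positivity)

theorem expSeries_term_le (hc : ∀ k, 0 < c k) (hAτ : ∀ k, A k ≤ exp (c k * τ)) {s : ℝ}
    (hs : τ ≤ s) (k : ℕ) : 1 / c k * (exp (-c k * s) * A k) ≤ 1 / c k := by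
  have hck := hc k
  calc 1 / c k * (exp (-c k * s) * A k) ≤ 1 / c k * (exp (-c k * s) * exp (c k * τ)) := by
        gcongr; exact hAτ k
    _ = 1 / c k * exp (-(c k * (s - τ))) := by rw [← exp_add]; ring_nf
    _ ≤ 1 / c k := by
        refine mul_le_of_le_one_right (by positivity) (exp_le_one_iff.2 ?_)
        have : 0 ≤ c k * (s - τ) := by nlinarith
        linarith

variable (hc : ∀ k, 0 < c k) (hA : ∀ k, 0 < A k) (hAτ : ∀ k, A k ≤ exp (c k * τ))
  (hsum : Summable fun k => 1 / c k)
include hc hA hAτ hsum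

theorem summable_expSeries {s : ℝ} (hs : τ ≤ s) :
    Summable fun k => 1 / c k * (exp (-c k * s) * A k) :=
  hsum.of_nonneg_of_le (fun k => (expSeries_term_pos hc hA k s).le) (expSeries_term_le hc hAτ hs)

theorem expSeries_strictAntiOn : StrictAntiOn (expSeries c A) (Ici τ) := fun _ hs₁ _ hs₂ h =>
  Summable.tsum_lt_tsum (i := 0) (fun k => (expSeries_term_strictAnti hc hA k h).le)
    (expSeries_term_strictAnti hc hA 0 h) (summable_expSeries hc hA hAτ hsum hs₂)
    (summable_expSeries hc hA hAτ hsum hs₁)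

theorem continuousOn_expSeries : ContinuousOn (expSeries c A) (Ici τ) :=
  continuousOn_tsum (fun k => by fun_prop) hsum fun k s hs => by
    rw [Real.norm_of_nonneg (expSeries_term_pos hc hA k s).le]
    exact expSeries_term_le hc hAτ hs k

theorem tendsto_expSeries_atTop : Tendsto (expSeries c A) atTop (𝓝 0) := by
  have hterm (k : ℕ) : Tendsto (fun s => 1 / c k * (exp (-c k * s) * A k)) atTop (𝓝 0) := by
    simpa using ((tendsto_exp_atBot.comp
      (tendsto_id.const_mul_atTop_of_neg (neg_lt_zero.2 (hc k)))).mul_const (A k)).const_mul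
        (1 / c k)
  have := tendsto_tsum_of_dominated_convergence hsum hterm <|
    (eventually_ge_atTop τ).mono fun s hs k => by
      rw [Real.norm_of_nonneg (expSeries_term_pos hc hA k s).le]
      exact expSeries_term_le hc hAτ hs k
  rwa [tsum_zero] at this

end ExpSeries

-- The paper's `λ_{2k+1}²`.
noncomputable def decayRate (k : ℕ) : ℝ := (2 * (k : ℝ) + 1) ^ 2 * π ^ 2

theorem decayRate_pos (k : ℕ) : 0 < decayRate k := by
  unfold decayRate
  positivity

theorem hasSum_one_div_decayRate : HasSum (fun k => 1 / decayRate k) (1 / 8) := by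
  have h := hasSum_one_div_odd_sq.div_const (π ^ 2)
  rw [show π ^ 2 / 8 / π ^ 2 = 1 / 8 by field_simp] at h
  refine h.congr_fun fun k => ?_
  rw [decayRate, div_div]

noncomputable def switchingAmplitude (n : ℕ) (t : ℕ → ℝ) (k : ℕ) : ℝ :=
  ∑ j ∈ range (2 * n + 1), (-1) ^ j * exp (decayRate k * t j)

theorem switchingAmplitude_mem_Icc {n : ℕ} {t : ℕ → ℝ} (ht : ∀ i < 2 * n, t i ≤ t (i + 1))
    (k : ℕ) :
    switchingAmplitude n t k ∈ Icc (exp (decayRate k * t 0)) (exp (decayRate k * t (2 * n))) :=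
  sum_range_alternating_mem_Icc (a := fun j => exp (decayRate k * t j)) n fun i hi => by
    have := decayRate_pos k
    have := ht i hi
    gcongr

theorem switchingAmplitude_pos {n : ℕ} {t : ℕ → ℝ} (ht : ∀ i < 2 * n, t i ≤ t (i + 1)) (k : ℕ) :
    0 < switchingAmplitude n t k :=
  (exp_pos _).trans_le (switchingAmplitude_mem_Icc ht k).1

theorem muOn_eq_one_sub_expSeries {n : ℕ} {t : ℕ → ℝ} (ht : ∀ i < 2 * n, t i ≤ t (i + 1))
    {s : ℝ} (hs : t (2 * n) ≤ s) :
    muOn n t s = 1 - 8 * expSeries decayRate (switchingAmplitude n t) s := by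
  have hsummable := summable_expSeries decayRate_pos (switchingAmplitude_pos ht)
    (fun k => (switchingAmplitude_mem_Icc ht k).2) hasSum_one_div_decayRate.summable hs
  calc muOn n t s = 8 * ∑' k, (1 / decayRate k -
        1 / decayRate k * (exp (-decayRate k * s) * switchingAmplitude n t k)) := by
        simp only [muOn, mul_sub, mul_one]; rfl
    _ = 1 - 8 * expSeries decayRate (switchingAmplitude n t) s := by
        rw [hasSum_one_div_decayRate.summable.tsum_sub hsummable, hasSum_one_div_decayRate.tsum_eq,
          expSeries]
        ring

theorem muOn_strictMono_tendsto_existsUnique_general (n : ℕ)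
    (t : ℕ → ℝ) (hmono : ∀ i, i < 2 * n → t i < t (i + 1)) :
    StrictMonoOn (muOn n t) (Set.Ici (t (2 * n))) ∧
    Filter.Tendsto (muOn n t) Filter.atTop (nhds 1) ∧
    ∀ M : ℝ, muOn n t (t (2 * n)) < M → M < 1 →
      ∃! s : ℝ, t (2 * n) < s ∧ muOn n t s = M := by
  have ht : ∀ i < 2 * n, t i ≤ t (i + 1) := fun i hi => (hmono i hi).le
  have hApos := switchingAmplitude_pos ht
  have hAle (k : ℕ) := (switchingAmplitude_mem_Icc ht k).2
  have hsum := hasSum_one_div_decayRate.summable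
  have hμ : EqOn (muOn n t) (fun s => 1 - 8 * expSeries decayRate (switchingAmplitude n t) s)
      (Ici (t (2 * n))) := fun s hs => muOn_eq_one_sub_expSeries ht hs
  have hstrict : StrictMonoOn (muOn n t) (Ici (t (2 * n))) := fun s₁ hs₁ s₂ hs₂ h => by
    rw [hμ hs₁, hμ hs₂]
    linarith [expSeries_strictAntiOn decayRate_pos hApos hAle hsum hs₁ hs₂ h]
  have hcont : ContinuousOn (muOn n t) (Ici (t (2 * n))) :=
    (continuousOn_const.sub (continuousOn_const.mul
      (continuousOn_expSeries decayRate_pos hApos hAle hsum))).congr hμ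
  have hlim : Tendsto (muOn n t) atTop (𝓝 1) := by
    have := tendsto_const_nhds (x := (1 : ℝ)) |>.sub
      ((tendsto_expSeries_atTop decayRate_pos hApos hAle hsum).const_mul 8)
    rw [mul_zero, sub_zero] at this
    exact this.congr' (eventuallyEq_of_mem (Ici_mem_atTop _) hμ).symm
  exact ⟨hstrict, hlim, fun M hM hM1 => hstrict.existsUnique_gt_eq_of_tendsto hcont hlim hM hM1⟩

/-- For switching times `0 = t₀ < t₁ < ⋯ < t_{2n}` the mass `μ` is strictly increasing on
`[t_{2n}, ∞)`, tends to `1` at infinity, and hence hits every level `M` with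
`μ(t_{2n}) < M < 1` at a unique time `t_{2n+1} > t_{2n}`. -/
theorem muOn_strictMono_tendsto_existsUnique (n : ℕ) (hn : 1 ≤ n)
    (t : ℕ → ℝ) (ht0 : t 0 = 0) (hmono : ∀ i, i < 2 * n → t i < t (i + 1)) :
    StrictMonoOn (muOn n t) (Set.Ici (t (2 * n))) ∧
    Filter.Tendsto (muOn n t) Filter.atTop (nhds 1) ∧
    ∀ M : ℝ, muOn n t (t (2 * n)) < M → M < 1 →
      ∃! s : ℝ, t (2 * n) < s ∧ muOn n t s = M :=
  muOn_strictMono_tendsto_existsUnique_general n t hmono
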